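/- arXiv:2001.02658 — 5 statements merged into one kernel-verified Lean document; each statement's English description precedes it below -/
import Mathlib

section
/- Let n ≥ 1, β > 0, ρ > 0, and let φ : ℝ → ℝ be an admissible φ-divergence generator: φ is twice continuously differentiable on [0,n], ρ-strongly convex on [0,n], φ(z) ≥ 0 for all z, φ(1) = 0 and φ'(1) = 0. Let v, v' ∈ ℝ^n, let p ∈ Δ_n maximize f_v(q) = ⟨v, q⟩ − (1/(βn)) Σ_i φ(n q_i) over Δ_n, and let p' ∈ Δ_n maximize f_{v'} over Δ_n. Then ‖p − p'‖ ≤ (β/(nρ)) ‖v − v'‖, where ‖·‖ is the Euclidean norm on ℝ^n. (That is, the gradient of the distributionally robust loss R is (β/(nρ))-Lipschitz continuous.) -/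
/-!
The map `q ↦ (1/(βn)) ∑ φ(n qᵢ)` is `(ρn/β)`-strongly convex on the simplex for the Euclidean
norm, so `f_v` is `(ρn/β)`-strongly concave there. At a maximizer `p` of a strongly concave
function, `f_v q + (ρn/(2β)) ‖p - q‖² ≤ f_v p` for every `q`. Adding this inequality for `(v, p, p')`
and `(v', p', p)` cancels the regularizer and leaves `(ρn/β) ‖p - p'‖² ≤ ⟪v - v', p - p'⟫`,
and Cauchy–Schwarz concludes.
-/

open Finset Set Filter Topology

section NormedSpace

variable {E : Type*} [NormedAddCommGroup E] [NormedSpace ℝ E] {s t : Set E} {m : ℝ} {f : E → ℝ}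

lemma StrongConvexOn.subset (hf : StrongConvexOn s m f) (hts : t ⊆ s) (ht : Convex ℝ t) :
    StrongConvexOn t m f :=
  ⟨ht, fun _ hx _ hy _ _ ha hb hab ↦ hf.2 (hts hx) (hts hy) ha hb hab⟩

lemma StrongConvexOn.const_mul (hf : StrongConvexOn s m f) {a : ℝ} (ha : 0 ≤ a) :
    StrongConvexOn s (a * m) fun x ↦ a * f x := by
  refine ⟨hf.1, fun x hx y hy b c hb hc hbc ↦ ?_⟩
  have h := mul_le_mul_of_nonneg_left (hf.2 hx hy hb hc hbc) ha
  simp only [smul_eq_mul] at h ⊢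
  linarith

lemma StrongConvexOn.comp_smul (hf : StrongConvexOn s m f) (c : ℝ) :
    StrongConvexOn ((c • ·) ⁻¹' s) (c ^ 2 * m) fun x ↦ f (c • x) := by
  refine ⟨hf.1.smul_preimage c, fun x hx y hy a b ha hb hab ↦ ?_⟩
  have h := hf.2 hx hy ha hb hab
  simp only [← smul_sub, norm_smul, Real.norm_eq_abs, mul_pow, sq_abs] at h
  simp only [smul_add, smul_comm c a, smul_comm c b]
  linarith

lemma strongConvexOn_of_tangent_add_sq_le (hs : Convex ℝ s) (f' : E → Module.Dual ℝ E)
    (hf : ∀ z ∈ s, ∀ z' ∈ s, f z + f' z (z' - z) + m / 2 * ‖z - z'‖ ^ 2 ≤ f z') :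
    StrongConvexOn s m f := by
  refine ⟨hs, fun x hx y hy a b ha hb hab ↦ ?_⟩
  have hz : a • x + b • y ∈ s := hs hx hy ha hb hab
  obtain rfl : a = 1 - b := eq_sub_of_add_eq hab
  set z := (1 - b) • x + b • y
  have hzx : ‖z - x‖ = b * ‖x - y‖ := by
    rw [show z - x = b • (y - x) by module, norm_smul, Real.norm_of_nonneg hb, norm_sub_rev]
  have hzy : ‖z - y‖ = (1 - b) * ‖x - y‖ := by
    rw [show z - y = (1 - b) • (x - y) by module, norm_smul, Real.norm_of_nonneg ha]
  have htangent : (1 - b) * f' z (x - z) + b * f' z (y - z) = 0 := by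
    rw [← smul_eq_mul, ← smul_eq_mul, ← map_smul, ← map_smul, ← map_add,
      show (1 - b) • (x - z) + b • (y - z) = 0 by module, map_zero]
  have hx' := mul_le_mul_of_nonneg_left (hf z hz x hx) ha
  have hy' := mul_le_mul_of_nonneg_left (hf z hz y hy) hb
  rw [hzx] at hx'
  rw [hzy] at hy'
  simp only [smul_eq_mul]
  nlinarith

lemma StrongConcaveOn.add_sq_norm_sub_le_of_isMaxOn {p q : E} (hf : StrongConcaveOn s m f)
    (hp : p ∈ s) (hmax : IsMaxOn f s p) (hq : q ∈ s) : f q + m / 2 * ‖p - q‖ ^ 2 ≤ f p := by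
  have hsegment : ∀ t ∈ Ioo (0 : ℝ) 1, f q + (1 - t) * (m / 2 * ‖p - q‖ ^ 2) ≤ f p := by
    rintro t ⟨ht0, ht1⟩
    have hconc := hf.2 hp hq (sub_nonneg.2 ht1.le) ht0.le (sub_add_cancel 1 t)
    have hle : f ((1 - t) • p + t • q) ≤ f p :=
      hmax (hf.1 hp hq (sub_nonneg.2 ht1.le) ht0.le (sub_add_cancel 1 t))
    simp only [smul_eq_mul] at hconc
    refine le_of_mul_le_mul_left ?_ ht0
    nlinarith
  have hlim : Tendsto (fun t : ℝ ↦ f q + (1 - t) * (m / 2 * ‖p - q‖ ^ 2)) (𝓝[>] 0)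
      (𝓝 (f q + m / 2 * ‖p - q‖ ^ 2)) :=
    tendsto_nhdsWithin_of_tendsto_nhds ((by fun_prop : Continuous _).tendsto' 0 _ (by simp))
  exact le_of_tendsto hlim (eventually_of_mem (Ioo_mem_nhdsGT one_pos) hsegment)

end NormedSpace

section InnerProductSpace

variable {E : Type*} [NormedAddCommGroup E] [InnerProductSpace ℝ E] {s : Set E} {m : ℝ}
  {G : E → ℝ}

lemma StrongConvexOn.strongConcaveOn_inner_sub (hG : StrongConvexOn s m G) (v : E) :
    StrongConcaveOn s m fun x ↦ inner ℝ v x - G x := by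
  have h := ((innerₛₗ ℝ v).concaveOn hG.1).uniformConcaveOn_zero.sub hG
  rwa [zero_add] at h

lemma StrongConvexOn.mul_norm_sub_le_of_isMaxOn_inner_sub (hG : StrongConvexOn s m G)
    {v v' p p' : E} (hp : p ∈ s) (hp' : p' ∈ s)
    (hmax : IsMaxOn (fun x ↦ inner ℝ v x - G x) s p)
    (hmax' : IsMaxOn (fun x ↦ inner ℝ v' x - G x) s p') :
    m * ‖p - p'‖ ≤ ‖v - v'‖ := by
  have h := (hG.strongConcaveOn_inner_sub v).add_sq_norm_sub_le_of_isMaxOn hp hmax hp'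
  have h' := (hG.strongConcaveOn_inner_sub v').add_sq_norm_sub_le_of_isMaxOn hp' hmax' hp
  have hmonotone : m * ‖p - p'‖ ^ 2 ≤ ‖v - v'‖ * ‖p - p'‖ := calc
    m * ‖p - p'‖ ^ 2 ≤ inner ℝ (v - v') (p - p') := by
      simp only [inner_sub_left, inner_sub_right, norm_sub_rev p' p] at h h' ⊢
      linarith
    _ ≤ ‖v - v'‖ * ‖p - p'‖ := real_inner_le_norm _ _
  rcases (norm_nonneg (p - p')).eq_or_lt with h0 | hpos
  · rw [← h0, mul_zero]
    exact norm_nonneg _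
  · exact le_of_mul_le_mul_right (by nlinarith) hpos

end InnerProductSpace

lemma strongConvexOn_sum_apply {ι : Type*} [Fintype ι] {t : ι → Set ℝ} {m : ℝ}
    {ψ : ι → ℝ → ℝ} (hψ : ∀ i, StrongConvexOn (t i) m (ψ i)) :
    StrongConvexOn {x : EuclideanSpace ℝ ι | ∀ i, x i ∈ t i} m fun x ↦ ∑ i, ψ i (x i) := by
  refine ⟨fun x hx y hy a b ha hb hab i ↦ by simpa using (hψ i).1 (hx i) (hy i) ha hb hab,
    fun x hx y hy a b ha hb hab ↦ ?_⟩
  have hcoord := fun i ↦ (hψ i).2 (hx i) (hy i) ha hb hab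
  simp only [smul_eq_mul, Real.norm_eq_abs, sq_abs] at hcoord
  simp only [PiLp.add_apply, PiLp.smul_apply, smul_eq_mul, EuclideanSpace.real_norm_sq_eq,
    PiLp.sub_apply, mul_sum, ← sum_add_distrib, ← sum_sub_distrib]
  exact sum_le_sum fun i _ ↦ hcoord i

theorem hardness_weighted_sampler_lipschitz_general
    (n : ℕ) (hn : 1 ≤ n) (β ρ : ℝ) (hβ : 0 < β) (hρ : 0 < ρ)
    (φ : ℝ → ℝ)
    (hsc : ∀ z ∈ Set.Icc (0:ℝ) (n:ℝ), ∀ z' ∈ Set.Icc (0:ℝ) (n:ℝ),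
      φ z + deriv φ z * (z' - z) + ρ / 2 * (z - z')^2 ≤ φ z')
    (f : (Fin n → ℝ) → (Fin n → ℝ) → ℝ)
    (hf : ∀ v q, f v q = ∑ i, v i * q i - (1 / (β * n)) * ∑ i, φ (n * q i))
    (v v' p p' : Fin n → ℝ)
    (hpmem : p ∈ stdSimplex ℝ (Fin n))
    (hpmax : ∀ q ∈ stdSimplex ℝ (Fin n), f v q ≤ f v p)
    (hp'mem : p' ∈ stdSimplex ℝ (Fin n))
    (hp'max : ∀ q ∈ stdSimplex ℝ (Fin n), f v' q ≤ f v' p') :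
    Real.sqrt (∑ i, (p i - p' i)^2)
      ≤ (β / (n * ρ)) * Real.sqrt (∑ i, (v i - v' i)^2) := by
  have hn0 : (0 : ℝ) < n := by exact_mod_cast hn
  have hφ : StrongConvexOn (Icc 0 (n : ℝ)) ρ φ :=
    strongConvexOn_of_tangent_add_sq_le (convex_Icc 0 (n : ℝ))
      (fun z ↦ LinearMap.toSpanSingleton ℝ ℝ (deriv φ z)) fun z hz z' hz' ↦ by
        simpa [mul_comm (z' - z), sq_abs] using hsc z hz z' hz'
  have hψ := (hφ.comp_smul (n : ℝ)).const_mul (by positivity : 0 ≤ 1 / (β * n))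
  -- `Fin n → ℝ` carries the sup norm, so strong convexity is taken in `EuclideanSpace ℝ (Fin n)`.
  have hG := (strongConvexOn_sum_apply fun _ : Fin n ↦ hψ).subset
    (t := WithLp.ofLp ⁻¹' stdSimplex ℝ (Fin n))
    (fun x hx i ↦ by
      obtain ⟨h0, h1⟩ := mem_Icc_of_mem_stdSimplex hx i
      exact ⟨by positivity, mul_le_of_le_one_right hn0.le h1⟩)
    ((convex_stdSimplex ℝ (Fin n)).linear_preimage
      (WithLp.linearEquiv 2 ℝ (Fin n → ℝ)).toLinearMap)
  have hmax : ∀ {w r : Fin n → ℝ}, (∀ q ∈ stdSimplex ℝ (Fin n), f w q ≤ f w r) →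
      IsMaxOn (fun x ↦ inner ℝ (WithLp.toLp 2 w) x - ∑ i, 1 / (β * n) * φ (n * x i))
        (WithLp.ofLp ⁻¹' stdSimplex ℝ (Fin n)) (WithLp.toLp 2 r) := by
    intro w r h x hx
    have hfG : ∀ q, f w q = inner ℝ (WithLp.toLp 2 w) (WithLp.toLp 2 q)
        - ∑ i, 1 / (β * n) * φ (n * q i) := fun q ↦ by
      simp [hf, EuclideanSpace.inner_toLp_toLp, dotProduct, mul_sum, mul_comm]
    have hx := h _ hx
    rwa [hfG, hfG, WithLp.toLp_ofLp] at hx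
  have hlip := hG.mul_norm_sub_le_of_isMaxOn_inner_sub hpmem hp'mem (hmax hpmax) (hmax hp'max)
  simp only [← WithLp.toLp_sub, EuclideanSpace.norm_eq, Real.norm_eq_abs, sq_abs,
    Pi.sub_apply] at hlip
  rw [← le_div_iff₀' (by positivity)] at hlip
  exact hlip.trans_eq (by field_simp)

/-- The hardness weighted sampling distribution (maximizer of the DRO inner
problem, i.e. the gradient of the distributionally robust loss) is
`(β/(nρ))`-Lipschitz as a function of the loss vector. -/
theorem hardness_weighted_sampler_lipschitz
    (n : ℕ) (hn : 1 ≤ n) (β ρ : ℝ) (hβ : 0 < β) (hρ : 0 < ρ)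
    (φ : ℝ → ℝ)
    (hC2 : ContDiffOn ℝ 2 φ (Set.Icc (0:ℝ) (n:ℝ)))
    (hsc : ∀ z ∈ Set.Icc (0:ℝ) (n:ℝ), ∀ z' ∈ Set.Icc (0:ℝ) (n:ℝ),
      φ z + deriv φ z * (z' - z) + ρ / 2 * (z - z')^2 ≤ φ z')
    (hφ0 : ∀ z : ℝ, 0 ≤ φ z) (hφ1 : φ 1 = 0) (hφ1' : deriv φ 1 = 0)
    (f : (Fin n → ℝ) → (Fin n → ℝ) → ℝ)
    (hf : ∀ v q, f v q = ∑ i, v i * q i - (1 / (β * n)) * ∑ i, φ (n * q i))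
    (v v' p p' : Fin n → ℝ)
    (hpmem : p ∈ stdSimplex ℝ (Fin n))
    (hpmax : ∀ q ∈ stdSimplex ℝ (Fin n), f v q ≤ f v p)
    (hp'mem : p' ∈ stdSimplex ℝ (Fin n))
    (hp'max : ∀ q ∈ stdSimplex ℝ (Fin n), f v' q ≤ f v' p') :
    Real.sqrt (∑ i, (p i - p' i)^2)
      ≤ (β / (n * ρ)) * Real.sqrt (∑ i, (v i - v' i)^2) :=
  hardness_weighted_sampler_lipschitz_general n hn β ρ hβ hρ φ hsc f hf v v' p p' hpmem hpmax hp'mem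
    hp'max
end

section
/- Let n ≥ 1, β > 0, ρ > 0, and let φ : ℝ → ℝ be an admissible φ-divergence generator: φ is twice continuously differentiable on [0,n], ρ-strongly convex on [0,n], φ(z) ≥ 0 for all z, φ(1) = 0 and φ'(1) = 0. Let v, v' ∈ ℝ^n, let p ∈ Δ_n maximize f_v(q) = ⟨v, q⟩ − (1/(βn)) Σ_i φ(n q_i) over Δ_n, and let p' ∈ Δ_n maximize f_{v'} over Δ_n. Then ⟨v − v', p − p'⟩ ≥ (nρ/β) ‖p − p'‖², where ‖·‖ is the Euclidean norm on ℝ^n. -/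
/-!
With `μ = nρ/β`, the objective `x ↦ ⟪v, x⟫ - (1/(βn)) Σ φ(n xᵢ)` is `μ`-strongly concave on the
simplex for the Euclidean norm: summing the tangent-line inequality for `φ` coordinatewise gives a
tangent-line inequality for the penalty, and a tangent-line inequality at the point of a segment
yields the chord inequality. A maximizer `p` of a `μ`-strongly concave function then has quadratic
growth, `g q + μ/2 ‖q - p‖² ≤ g p` (compare `g` with its values on the segment from `p` to `q` and
let the segment shrink). Writing this for `(v, p, p')` and `(v', p', p)` and adding, the penalty
terms cancel and `⟨v - v', p - p'⟩ ≥ μ ‖p - p'‖²` remains.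
-/

open Finset Filter Topology

theorem strongConvexOn_of_tangent_le {E : Type*} [NormedAddCommGroup E] [InnerProductSpace ℝ E]
    {s : Set E} {f : E → ℝ} {g : E → E} {m : ℝ}
    (hs : Convex ℝ s)
    (h : ∀ x ∈ s, ∀ y ∈ s, f x + inner ℝ (g x) (y - x) + m / 2 * ‖x - y‖ ^ 2 ≤ f y) :
    StrongConvexOn s m f := by
  refine ⟨hs, fun x hx y hy a b ha hb hab => ?_⟩
  obtain rfl : b = 1 - a := by linarith
  set z := a • x + (1 - a) • y
  have hxz : x - z = (1 - a) • (x - y) := by module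
  have hyz : y - z = (-a) • (x - y) := by module
  have hx' := h z (hs hx hy ha hb hab) x hx
  have hy' := h z (hs hx hy ha hb hab) y hy
  rw [← norm_neg, neg_sub, hxz, inner_smul_right, norm_smul] at hx'
  rw [← norm_neg, neg_sub, hyz, inner_smul_right, norm_smul] at hy'
  simp only [Real.norm_eq_abs, mul_pow, sq_abs, smul_eq_mul] at hx' hy' ⊢
  nlinarith [mul_le_mul_of_nonneg_left hx' ha, mul_le_mul_of_nonneg_left hy' hb]

theorem UniformConcaveOn.add_le_of_isMaxOn {E : Type*} [NormedAddCommGroup E] [NormedSpace ℝ E]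
    {s : Set E} {ψ : ℝ → ℝ} {g : E → ℝ} {p q : E}
    (hg : UniformConcaveOn s ψ g) (hmax : IsMaxOn g s p) (hp : p ∈ s) (hq : q ∈ s) :
    g q + ψ ‖q - p‖ ≤ g p := by
  have hseg : ∀ t ∈ Set.Ioo (0 : ℝ) 1, g q + (1 - t) * ψ ‖q - p‖ ≤ g p := by
    rintro t ⟨ht0, ht1⟩
    have hchord := hg.2 hq hp ht0.le (sub_nonneg.2 ht1.le) (add_sub_cancel t 1)
    have hle := isMaxOn_iff.1 hmax _ (hg.1 hq hp ht0.le (sub_nonneg.2 ht1.le) (add_sub_cancel t 1))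
    simp only [smul_eq_mul] at hchord hle
    have : t * (g q + (1 - t) * ψ ‖q - p‖) ≤ t * g p := by linarith
    exact le_of_mul_le_mul_left this ht0
  have hlim : Tendsto (fun t : ℝ => g q + (1 - t) * ψ ‖q - p‖) (𝓝[>] 0)
      (𝓝 (g q + ψ ‖q - p‖)) :=
    tendsto_nhdsWithin_of_tendsto_nhds <|
      (by fun_prop : Continuous fun t : ℝ => g q + (1 - t) * ψ ‖q - p‖).tendsto' 0 _ (by simp)
  exact le_of_tendsto hlim (mem_of_superset (Ioo_mem_nhdsGT one_pos) hseg)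

theorem sum_comp_mul_tangent_le {ι : Type*} [Fintype ι] {I : Set ℝ} {φ φ' : ℝ → ℝ}
    {m κ c : ℝ} (hκ : 0 ≤ κ)
    (hφ : ∀ z ∈ I, ∀ z' ∈ I, φ z + φ' z * (z' - z) + m / 2 * (z - z') ^ 2 ≤ φ z')
    {x y : EuclideanSpace ℝ ι} (hx : ∀ i, c * x i ∈ I) (hy : ∀ i, c * y i ∈ I) :
    κ * ∑ i, φ (c * x i) + inner ℝ (WithLp.toLp 2 fun i => κ * c * φ' (c * x i)) (y - x)
      + κ * c ^ 2 * m / 2 * ‖x - y‖ ^ 2 ≤ κ * ∑ i, φ (c * y i) := by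
  rw [EuclideanSpace.real_norm_sq_eq, PiLp.inner_apply, mul_sum, mul_sum, mul_sum,
    ← sum_add_distrib, ← sum_add_distrib]
  refine sum_le_sum fun i _ => ?_
  have := mul_le_mul_of_nonneg_left (hφ _ (hx i) _ (hy i)) hκ
  simp only [PiLp.sub_apply, RCLike.inner_apply', conj_trivial]
  linear_combination this

-- `EuclideanSpace`, not `Fin n → ℝ`: strong convexity refers to the norm, and only the
-- Euclidean one gives the modulus `nρ/β`.
theorem strongConvexOn_divergence_penalty {n : ℕ} {β ρ : ℝ} (hβ : 0 < β) {φ : ℝ → ℝ}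
    (hsc : ∀ z ∈ Set.Icc (0:ℝ) n, ∀ z' ∈ Set.Icc (0:ℝ) n,
      φ z + deriv φ z * (z' - z) + ρ / 2 * (z - z') ^ 2 ≤ φ z') :
    StrongConvexOn (WithLp.ofLp ⁻¹' stdSimplex ℝ (Fin n)) (n * ρ / β)
      fun x : EuclideanSpace ℝ (Fin n) => 1 / (β * n) * ∑ i, φ (n * x i) := by
  have hbox : ∀ x : EuclideanSpace ℝ (Fin n), x.ofLp ∈ stdSimplex ℝ (Fin n) →
      ∀ i, (n : ℝ) * x i ∈ Set.Icc (0 : ℝ) n := fun x hx i => by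
    obtain ⟨h0, h1⟩ := mem_Icc_of_mem_stdSimplex hx i
    exact ⟨mul_nonneg (Nat.cast_nonneg n) h0, mul_le_of_le_one_right (Nat.cast_nonneg n) h1⟩
  have hmod : 1 / (β * n) * (n : ℝ) ^ 2 * ρ = n * ρ / β := by
    rcases eq_or_ne (n : ℝ) 0 with hn | hn
    · simp [hn]
    · field_simp
  refine strongConvexOn_of_tangent_le
    (g := fun x : EuclideanSpace ℝ (Fin n) => WithLp.toLp 2 fun i =>
      1 / (β * n) * n * deriv φ (n * x i))
    ((convex_stdSimplex ℝ (Fin n)).linear_preimage (WithLp.linearEquiv 2 ℝ _).toLinearMap)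
    fun x hx y hy => ?_
  simpa only [hmod] using
    sum_comp_mul_tangent_le (κ := 1 / (β * n)) (by positivity) hsc (hbox x hx) (hbox y hy)

theorem strongConcaveOn_hardness_objective {n : ℕ} {β ρ : ℝ} (hβ : 0 < β) {φ : ℝ → ℝ}
    (hsc : ∀ z ∈ Set.Icc (0:ℝ) n, ∀ z' ∈ Set.Icc (0:ℝ) n,
      φ z + deriv φ z * (z' - z) + ρ / 2 * (z - z') ^ 2 ≤ φ z') (w : Fin n → ℝ) :
    StrongConcaveOn (WithLp.ofLp ⁻¹' stdSimplex ℝ (Fin n)) (n * ρ / β)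
      fun x : EuclideanSpace ℝ (Fin n) => ∑ i, w i * x i - 1 / (β * n) * ∑ i, φ (n * x i) := by
  have hpenalty := strongConvexOn_divergence_penalty hβ hsc
  have hlinear := ((innerₛₗ ℝ (WithLp.toLp 2 w)).concaveOn hpenalty.1).uniformConcaveOn_zero
  have hdiff := hlinear.sub hpenalty
  rw [zero_add] at hdiff
  unfold StrongConcaveOn
  convert hdiff using 2 with x
  simp [PiLp.inner_apply, mul_comm]

theorem hardness_weighted_sampler_strong_monotone_general
    (n : ℕ) (β ρ : ℝ) (hβ : 0 < β)
    (φ : ℝ → ℝ)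
    (hsc : ∀ z ∈ Set.Icc (0:ℝ) (n:ℝ), ∀ z' ∈ Set.Icc (0:ℝ) (n:ℝ),
      φ z + deriv φ z * (z' - z) + ρ / 2 * (z - z')^2 ≤ φ z')
    (f : (Fin n → ℝ) → (Fin n → ℝ) → ℝ)
    (hf : ∀ v q, f v q = ∑ i, v i * q i - (1 / (β * n)) * ∑ i, φ (n * q i))
    (v v' p p' : Fin n → ℝ)
    (hpmem : p ∈ stdSimplex ℝ (Fin n))
    (hpmax : ∀ q ∈ stdSimplex ℝ (Fin n), f v q ≤ f v p)
    (hp'mem : p' ∈ stdSimplex ℝ (Fin n))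
    (hp'max : ∀ q ∈ stdSimplex ℝ (Fin n), f v' q ≤ f v' p') :
    (n * ρ / β) * ∑ i, (p i - p' i)^2
      ≤ ∑ i, (v i - v' i) * (p i - p' i) := by
  have hgrowth (w q q' : Fin n → ℝ) (hq : q ∈ stdSimplex ℝ (Fin n))
      (hmax : ∀ x ∈ stdSimplex ℝ (Fin n), f w x ≤ f w q) (hq' : q' ∈ stdSimplex ℝ (Fin n)) :
      f w q' + n * ρ / β / 2 * ∑ i, (q' i - q i) ^ 2 ≤ f w q := by
    have := (strongConcaveOn_hardness_objective hβ hsc w).add_le_of_isMaxOn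
      (p := WithLp.toLp 2 q) (q := WithLp.toLp 2 q')
      (isMaxOn_iff.2 fun x hx => by simpa only [hf] using hmax _ hx) hq hq'
    rwa [EuclideanSpace.real_norm_sq_eq, ← hf, ← hf] at this
  have h := hgrowth v p p' hpmem hpmax hp'mem
  have h' := hgrowth v' p' p hp'mem hp'max hpmem
  have hsq_comm : ∑ i, (p' i - p i) ^ 2 = ∑ i, (p i - p' i) ^ 2 :=
    sum_congr rfl fun i _ => by ring
  have hgap : ∑ i, (v i - v' i) * (p i - p' i) = (f v p - f v' p) - (f v p' - f v' p') := by
    simp only [hf, sub_mul, mul_sub, sum_sub_distrib]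
    ring
  rw [hsq_comm] at h
  linarith

/-- Strong monotonicity of the hardness weighted sampling distribution:
`⟨v − v', p − p'⟩ ≥ (nρ/β) ‖p − p'‖²` for the maximizers `p, p'` of the DRO
inner problems at loss vectors `v, v'`. -/
theorem hardness_weighted_sampler_strong_monotone
    (n : ℕ) (hn : 1 ≤ n) (β ρ : ℝ) (hβ : 0 < β) (hρ : 0 < ρ)
    (φ : ℝ → ℝ)
    (hC2 : ContDiffOn ℝ 2 φ (Set.Icc (0:ℝ) (n:ℝ)))
    (hsc : ∀ z ∈ Set.Icc (0:ℝ) (n:ℝ), ∀ z' ∈ Set.Icc (0:ℝ) (n:ℝ),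
      φ z + deriv φ z * (z' - z) + ρ / 2 * (z - z')^2 ≤ φ z')
    (hφ0 : ∀ z : ℝ, 0 ≤ φ z) (hφ1 : φ 1 = 0) (hφ1' : deriv φ 1 = 0)
    (f : (Fin n → ℝ) → (Fin n → ℝ) → ℝ)
    (hf : ∀ v q, f v q = ∑ i, v i * q i - (1 / (β * n)) * ∑ i, φ (n * q i))
    (v v' p p' : Fin n → ℝ)
    (hpmem : p ∈ stdSimplex ℝ (Fin n))
    (hpmax : ∀ q ∈ stdSimplex ℝ (Fin n), f v q ≤ f v p)
    (hp'mem : p' ∈ stdSimplex ℝ (Fin n))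
    (hp'max : ∀ q ∈ stdSimplex ℝ (Fin n), f v' q ≤ f v' p') :
    (n * ρ / β) * ∑ i, (p i - p' i)^2
      ≤ ∑ i, (v i - v' i) * (p i - p' i) :=
  hardness_weighted_sampler_strong_monotone_general n β ρ hβ φ hsc f hf v v' p p' hpmem hpmax hp'mem
    hp'max
end

section
/- Let n ≥ 1, m ≥ 1, β > 0, ρ > 0, and let φ : ℝ → ℝ be an admissible φ-divergence generator: φ is twice continuously differentiable on [0,n], ρ-strongly convex on [0,n], φ(z) ≥ 0 for all z, φ(1) = 0 and φ'(1) = 0. Define the distributionally robust loss R(v) = sup_{q ∈ Δ_n} (⟨v, q⟩ − (1/(βn)) Σ_i φ(n q_i)) for v ∈ ℝ^n. Let L : ℝ^m → ℝ^n be a map (the vector of per-example losses as a function of the parameters) whose coordinate functions L_1, …, L_n are each differentiable at a point θ ∈ ℝ^m, and let p ∈ Δ_n be the maximizer of f_{L(θ)}(q) = ⟨L(θ), q⟩ − (1/(βn)) Σ_i φ(n q_i) over Δ_n. Then the composite θ ↦ R(L(θ)) is differentiable at θ with gradient Σ_{i=1}^n p_i ∇L_i(θ), i.e. the gradient of the distributionally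 robust loss equals the p̄(L(θ))-weighted expectation of the per-example loss gradients. -/
/-!
Since `φ` is `ρ`-strongly convex, the inner objective `q ↦ ⟪v, q⟫ - r q`, with
`r q = (1 / (β n)) ∑ᵢ φ (n qᵢ)`, is strongly concave on the simplex, so it falls off
quadratically away from its maximizer `p`:
`⟪v, q⟫ - r q + κ ‖q - p‖² ≤ ⟪v, p⟫ - r p`.
Combined with Cauchy–Schwarz this sandwiches the robust loss,
`0 ≤ R w - R v - ⟪p, w - v⟫ ≤ ‖w - v‖² / (4κ)`,
so `R` has gradient `p` at `v` (Danskin's theorem), and the chain rule through `L` gives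
the gradient `∑ᵢ pᵢ ∇Lᵢ(θ)`.
-/

open Finset Filter Asymptotics Topology InnerProductSpace
open scoped RealInnerProductSpace

theorem hasFDerivAt_of_norm_sub_le_mul_sq {E F : Type*} [NormedAddCommGroup E] [NormedSpace ℝ E]
    [NormedAddCommGroup F] [NormedSpace ℝ F] {f : E → F} {f' : E →L[ℝ] F} {x : E} {C : ℝ}
    (h : ∀ y, ‖f y - f x - f' (y - x)‖ ≤ C * ‖y - x‖ ^ 2) : HasFDerivAt f f' x := by
  rw [hasFDerivAt_iff_isLittleO]
  have hsq : (fun y => ‖y - x‖ ^ 2) =o[𝓝 x] fun y => y - x :=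
    (isLittleO_norm_pow_id one_lt_two).comp_tendsto (tendsto_sub_nhds_zero_iff.2 tendsto_id)
  refine IsBigO.trans_isLittleO ?_ hsq
  refine IsBigO.of_bound C (Eventually.of_forall fun y => ?_)
  simpa using h y

theorem HasGradientAt.comp_euclideanSpace {ι F : Type*} [Fintype ι] [NormedAddCommGroup F]
    [InnerProductSpace ℝ F] [CompleteSpace F] {R : EuclideanSpace ℝ ι → ℝ}
    {L : F → EuclideanSpace ℝ ι} {p : EuclideanSpace ℝ ι} {g : ι → F} {x : F}
    (hR : HasGradientAt R p (L x)) (hL : ∀ i, HasGradientAt (fun y => L y i) (g i) x) :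
    HasGradientAt (fun y => R (L y)) (∑ i, p i • g i) x := by
  have hLpi : HasFDerivAt (fun y => WithLp.ofLp (L y))
      (ContinuousLinearMap.pi fun i => toDual ℝ F (g i)) x :=
    hasFDerivAt_pi.2 fun i => (hL i).hasFDerivAt
  have hL' := ((PiLp.continuousLinearEquiv 2 ℝ fun _ : ι => ℝ).symm.hasFDerivAt).comp x hLpi
  refine (hR.hasFDerivAt.comp x hL').congr_fderiv ?_
  ext w
  simp [PiLp.inner_apply, mul_comm]

section QuadraticGrowth

variable {E : Type*} [NormedAddCommGroup E] [InnerProductSpace ℝ E]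

theorem add_sq_le_of_forall_le_of_midpoint {S : Set E} {h : E → ℝ} {p : E} {κ : ℝ}
    (hmax : ∀ q ∈ S, h q ≤ h p)
    (hmid : ∀ q ∈ S,
      midpoint ℝ p q ∈ S ∧
        (h p + h q) / 2 + κ / 2 * ‖q - p‖ ^ 2 ≤ h (midpoint ℝ p q))
    {q : E} (hq : q ∈ S) : h q + κ * ‖q - p‖ ^ 2 ≤ h p := by
  obtain ⟨hmS, hm⟩ := hmid q hq
  linarith [hmax _ hmS]

theorem inner_sub_le_of_quadratic_growth {S : Set E} {r : E → ℝ} {p v₀ : E} {κ : ℝ}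
    (hκ : 0 < κ) (hgrowth : ∀ q ∈ S, ⟪v₀, q⟫ - r q + κ * ‖q - p‖ ^ 2 ≤ ⟪v₀, p⟫ - r p)
    (v : E) {q : E} (hq : q ∈ S) :
    ⟪v, q⟫ - r q ≤ ⟪v₀, p⟫ - r p + ⟪p, v - v₀⟫ + ‖v - v₀‖ ^ 2 / (4 * κ) := by
  have hsplit : ⟪v, q⟫ = ⟪v₀, q⟫ + ⟪p, v - v₀⟫ + ⟪v - v₀, q - p⟫ := by
    simp only [inner_sub_left, inner_sub_right, real_inner_comm p]; ring
  have hamgm :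
      ‖v - v₀‖ * ‖q - p‖ ≤ κ * ‖q - p‖ ^ 2 + ‖v - v₀‖ ^ 2 / (4 * κ) := by
    have : κ * ‖q - p‖ ^ 2 + ‖v - v₀‖ ^ 2 / (4 * κ) - ‖v - v₀‖ * ‖q - p‖
        = (2 * κ * ‖q - p‖ - ‖v - v₀‖) ^ 2 / (4 * κ) := by field_simp; ring
    rw [← sub_nonneg, this]
    positivity
  linarith [hgrowth q hq, real_inner_le_norm (v - v₀) (q - p)]

theorem hasGradientAt_sSup_inner_sub_of_quadratic_growth [CompleteSpace E] {S : Set E}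
    {r : E → ℝ} {p v₀ : E} {κ : ℝ} (hκ : 0 < κ) (hp : p ∈ S)
    (hgrowth : ∀ q ∈ S, ⟪v₀, q⟫ - r q + κ * ‖q - p‖ ^ 2 ≤ ⟪v₀, p⟫ - r p) :
    HasGradientAt (fun v => sSup ((fun q => ⟪v, q⟫ - r q) '' S)) p v₀ := by
  have hbound := inner_sub_le_of_quadratic_growth hκ hgrowth
  have hsSup_le : ∀ v, sSup ((fun q => ⟪v, q⟫ - r q) '' S)
      ≤ ⟪v₀, p⟫ - r p + ⟪p, v - v₀⟫ + ‖v - v₀‖ ^ 2 / (4 * κ) := fun v =>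
    csSup_le ⟨_, p, hp, rfl⟩ (Set.forall_mem_image.2 fun q hq => hbound v hq)
  have hle_sSup : ∀ v, ⟪v, p⟫ - r p ≤ sSup ((fun q => ⟪v, q⟫ - r q) '' S) := fun v =>
    le_csSup ⟨_, Set.forall_mem_image.2 fun q hq => hbound v hq⟩ ⟨p, hp, rfl⟩
  have hv₀ : sSup ((fun q => ⟪v₀, q⟫ - r q) '' S) = ⟪v₀, p⟫ - r p :=
    le_antisymm (by simpa using hsSup_le v₀) (hle_sSup v₀)
  refine hasFDerivAt_of_norm_sub_le_mul_sq (C := 1 / (4 * κ)) fun v => ?_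
  have hlin : ⟪v, p⟫ = ⟪v₀, p⟫ + ⟪p, v - v₀⟫ := by
    rw [inner_sub_right, real_inner_comm v p, real_inner_comm v₀ p]; ring
  rw [toDual_apply_apply, hv₀, Real.norm_eq_abs, abs_le]
  constructor
  · have : 0 ≤ 1 / (4 * κ) * ‖v - v₀‖ ^ 2 := by positivity
    linarith [hle_sSup v]
  · linarith [hsSup_le v, div_eq_mul_one_div (‖v - v₀‖ ^ 2) (4 * κ)]

end QuadraticGrowth

section Simplex

variable {ι : Type*} [Fintype ι]

def probSimplex (ι : Type*) [Fintype ι] : Set (EuclideanSpace ℝ ι) :=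
  {q | (∀ i, 0 ≤ q i) ∧ ∑ i, q i = 1}

theorem convex_probSimplex : Convex ℝ (probSimplex ι) := by
  rintro p ⟨hp0, hp1⟩ q ⟨hq0, hq1⟩ a b ha hb hab
  refine ⟨fun i => ?_, ?_⟩
  · simp only [PiLp.add_apply, PiLp.smul_apply, smul_eq_mul]
    exact add_nonneg (mul_nonneg ha (hp0 i)) (mul_nonneg hb (hq0 i))
  · simp [sum_add_distrib, ← mul_sum, hp1, hq1, hab]

theorem apply_mem_Icc_of_mem_probSimplex {q : EuclideanSpace ℝ ι} (hq : q ∈ probSimplex ι)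
    (i : ι) : q i ∈ Set.Icc (0 : ℝ) 1 :=
  ⟨hq.1 i, hq.2 ▸ single_le_sum (fun j _ => hq.1 j) (mem_univ i)⟩

theorem midpoint_apply_euclideanSpace (p q : EuclideanSpace ℝ ι) (i : ι) :
    midpoint ℝ p q i = (p i + q i) / 2 := by
  simp only [midpoint_eq_smul_add, PiLp.smul_apply, PiLp.add_apply, smul_eq_mul, invOf_eq_inv]
  ring

theorem midpoint_add_sq_le_of_tangent_le {φ : ℝ → ℝ} {ρ : ℝ} {s : Set ℝ}
    (hsc : ∀ z ∈ s, ∀ z' ∈ s,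
      φ z + deriv φ z * (z' - z) + ρ / 2 * (z - z') ^ 2 ≤ φ z')
    {a b : ℝ} (ha : a ∈ s) (hb : b ∈ s) (hab : (a + b) / 2 ∈ s) :
    φ ((a + b) / 2) + ρ / 8 * (a - b) ^ 2 ≤ (φ a + φ b) / 2 := by
  nlinarith [hsc _ hab _ ha, hsc _ hab _ hb]

theorem sum_midpoint_add_sq_le_of_tangent_le {φ : ℝ → ℝ} {ρ c : ℝ} (hc : 0 ≤ c)
    (hsc : ∀ z ∈ Set.Icc 0 c, ∀ z' ∈ Set.Icc 0 c,
      φ z + deriv φ z * (z' - z) + ρ / 2 * (z - z') ^ 2 ≤ φ z')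
    {p q : EuclideanSpace ℝ ι} (hp : p ∈ probSimplex ι) (hq : q ∈ probSimplex ι) :
    ∑ i, φ (c * midpoint ℝ p q i) + ρ * c ^ 2 / 8 * ‖q - p‖ ^ 2
      ≤ (∑ i, φ (c * p i) + ∑ i, φ (c * q i)) / 2 := by
  have hscale : ∀ r ∈ probSimplex ι, ∀ i, c * r i ∈ Set.Icc 0 c := fun r hr i => by
    obtain ⟨h0, h1⟩ := apply_mem_Icc_of_mem_probSimplex hr i
    exact ⟨mul_nonneg hc h0, mul_le_of_le_one_right hc h1⟩
  have hmid := convex_probSimplex.midpoint_mem hp hq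
  have hcoord : ∀ i, φ (c * midpoint ℝ p q i) + ρ * c ^ 2 / 8 * (q i - p i) ^ 2
      ≤ (φ (c * p i) + φ (c * q i)) / 2 := fun i => by
    have hm := hscale _ hmid i
    have hlin : c * midpoint ℝ p q i = (c * p i + c * q i) / 2 := by
      rw [midpoint_apply_euclideanSpace]; ring
    have hquad : ρ / 8 * (c * p i - c * q i) ^ 2 = ρ * c ^ 2 / 8 * (q i - p i) ^ 2 := by ring
    rw [hlin] at hm ⊢
    linarith [midpoint_add_sq_le_of_tangent_le hsc (hscale p hp i) (hscale q hq i) hm]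
  rw [EuclideanSpace.real_norm_sq_eq, mul_sum, ← sum_add_distrib, ← sum_add_distrib, sum_div]
  exact sum_le_sum fun i _ => by simpa using hcoord i

theorem inner_sub_sum_add_sq_le_of_forall_le {φ : ℝ → ℝ} {ρ c w : ℝ} (hc : 0 ≤ c)
    (hw : 0 ≤ w) (hsc : ∀ z ∈ Set.Icc 0 c, ∀ z' ∈ Set.Icc 0 c,
      φ z + deriv φ z * (z' - z) + ρ / 2 * (z - z') ^ 2 ≤ φ z')
    {v p : EuclideanSpace ℝ ι} (hp : p ∈ probSimplex ι)
    (hmax : ∀ q ∈ probSimplex ι,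
      ⟪v, q⟫ - w * ∑ i, φ (c * q i) ≤ ⟪v, p⟫ - w * ∑ i, φ (c * p i))
    {q : EuclideanSpace ℝ ι} (hq : q ∈ probSimplex ι) :
    ⟪v, q⟫ - w * ∑ i, φ (c * q i) + w * ρ * c ^ 2 / 4 * ‖q - p‖ ^ 2
      ≤ ⟪v, p⟫ - w * ∑ i, φ (c * p i) := by
  refine add_sq_le_of_forall_le_of_midpoint hmax (fun q hq => ⟨?_, ?_⟩) hq
  · exact convex_probSimplex.midpoint_mem hp hq
  · have hinner : ⟪v, midpoint ℝ p q⟫ = (⟪v, p⟫ + ⟪v, q⟫) / 2 := by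
      rw [midpoint_eq_smul_add, inner_smul_right, inner_add_right, invOf_eq_inv]; ring
    rw [hinner]
    nlinarith [mul_le_mul_of_nonneg_left (sum_midpoint_add_sq_le_of_tangent_le hc hsc hp hq) hw]

end Simplex

theorem distributionally_robust_loss_chain_rule_general
    (n m : ℕ) (hn : 1 ≤ n) (β ρ : ℝ) (hβ : 0 < β) (hρ : 0 < ρ)
    (φ : ℝ → ℝ)
    (hsc : ∀ z ∈ Set.Icc (0:ℝ) (n:ℝ), ∀ z' ∈ Set.Icc (0:ℝ) (n:ℝ),
      φ z + deriv φ z * (z' - z) + ρ / 2 * (z - z')^2 ≤ φ z')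
    (Δ : Set (EuclideanSpace ℝ (Fin n)))
    (hΔ : Δ = {q : EuclideanSpace ℝ (Fin n) | (∀ i, 0 ≤ q i) ∧ ∑ i, q i = 1})
    (f : EuclideanSpace ℝ (Fin n) → EuclideanSpace ℝ (Fin n) → ℝ)
    (hf : ∀ v q, f v q = ∑ i, v i * q i - (1 / (β * n)) * ∑ i, φ (n * q i))
    (R : EuclideanSpace ℝ (Fin n) → ℝ)
    (hR : ∀ v, R v = sSup (f v '' Δ))
    (L : EuclideanSpace ℝ (Fin m) → EuclideanSpace ℝ (Fin n))
    (θ : EuclideanSpace ℝ (Fin m))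
    (gL : Fin n → EuclideanSpace ℝ (Fin m))
    (hgL : ∀ i, HasGradientAt (fun θ' => L θ' i) (gL i) θ)
    (p : EuclideanSpace ℝ (Fin n))
    (hpmem : p ∈ Δ)
    (hpmax : ∀ q ∈ Δ, f (L θ) q ≤ f (L θ) p) :
    HasGradientAt (fun θ' => R (L θ')) (∑ i, p i • gL i) θ := by
  change Δ = probSimplex (Fin n) at hΔ
  subst hΔ
  have hfinner : f = fun v q => ⟪v, q⟫ - 1 / (β * n) * ∑ i, φ (n * q i) := by
    funext v q
    simp [hf, PiLp.inner_apply, mul_comm]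
  subst hfinner
  obtain rfl : R = fun v => sSup (_ '' probSimplex (Fin n)) := funext hR
  have hn0 : (0 : ℝ) < n := by exact_mod_cast hn
  have hgrowth : ∀ q ∈ probSimplex (Fin n), _ := fun q hq =>
    inner_sub_sum_add_sq_le_of_forall_le hn0.le (by positivity) hsc hpmem hpmax hq
  exact (hasGradientAt_sSup_inner_sub_of_quadratic_growth (by positivity) hpmem
    hgrowth).comp_euclideanSpace hgL

/-- Stochastic gradient of the distributionally robust loss: if each per-example
loss `θ ↦ L(θ)ᵢ` has gradient `gL i` at `θ` and `p` maximizes the inner problem at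
`L(θ)`, then `θ ↦ R(L(θ))` has gradient `Σᵢ pᵢ ∇Lᵢ(θ)` at `θ`. -/
theorem distributionally_robust_loss_chain_rule
    (n m : ℕ) (hn : 1 ≤ n) (hm : 1 ≤ m) (β ρ : ℝ) (hβ : 0 < β) (hρ : 0 < ρ)
    (φ : ℝ → ℝ)
    (hC2 : ContDiffOn ℝ 2 φ (Set.Icc (0:ℝ) (n:ℝ)))
    (hsc : ∀ z ∈ Set.Icc (0:ℝ) (n:ℝ), ∀ z' ∈ Set.Icc (0:ℝ) (n:ℝ),
      φ z + deriv φ z * (z' - z) + ρ / 2 * (z - z')^2 ≤ φ z')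
    (hφ0 : ∀ z : ℝ, 0 ≤ φ z) (hφ1 : φ 1 = 0) (hφ1' : deriv φ 1 = 0)
    (Δ : Set (EuclideanSpace ℝ (Fin n)))
    (hΔ : Δ = {q : EuclideanSpace ℝ (Fin n) | (∀ i, 0 ≤ q i) ∧ ∑ i, q i = 1})
    (f : EuclideanSpace ℝ (Fin n) → EuclideanSpace ℝ (Fin n) → ℝ)
    (hf : ∀ v q, f v q = ∑ i, v i * q i - (1 / (β * n)) * ∑ i, φ (n * q i))
    (R : EuclideanSpace ℝ (Fin n) → ℝ)
    (hR : ∀ v, R v = sSup (f v '' Δ))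
    (L : EuclideanSpace ℝ (Fin m) → EuclideanSpace ℝ (Fin n))
    (θ : EuclideanSpace ℝ (Fin m))
    (gL : Fin n → EuclideanSpace ℝ (Fin m))
    (hgL : ∀ i, HasGradientAt (fun θ' => L θ' i) (gL i) θ)
    (p : EuclideanSpace ℝ (Fin n))
    (hpmem : p ∈ Δ)
    (hpmax : ∀ q ∈ Δ, f (L θ) q ≤ f (L θ) p) :
    HasGradientAt (fun θ' => R (L θ')) (∑ i, p i • gL i) θ :=
  distributionally_robust_loss_chain_rule_general n m hn β ρ hβ hρ φ hsc Δ hΔ f hf R hR L θ gL hgL p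
    hpmem hpmax
end

section
/- Let n ≥ 1, β > 0, ρ > 0, and let φ : ℝ → ℝ be an admissible φ-divergence generator: φ is twice continuously differentiable on [0,n], ρ-strongly convex on [0,n], φ(z) ≥ 0 for all z, φ(1) = 0 and φ'(1) = 0. Fix i ∈ {1,…,n}, v ∈ ℝ^n, ε > 0, and set v' = v + ε e_i, where e_i is the i-th standard basis vector. If p ∈ Δ_n maximizes f_v(q) = ⟨v, q⟩ − (1/(βn)) Σ_k φ(n q_k) over Δ_n and p' ∈ Δ_n maximizes f_{v'} over Δ_n, then for every j ≠ i one has p'_j ≤ p_j. (The hardness weighted sampling probability of an example is a nonincreasing function of any other example's loss.) -/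
/-! Write the objective as `∑ k, (v k * q k - G (q k))` with `G x = φ (n * x) / (β * n)`, which
is strictly convex on `[0, 1]`. Adding the optimality inequalities of `p` and `p'` tested at each
other gives `ε * (p' i - p i) ≥ 0`. If moreover `p j < p' j` for some `j ≠ i`, mass conservation
yields `m ≠ i, j` with `p' m < p m`. Shifting a small mass `t` from `m` to `j` in `p`, and from
`j` to `m` in `p'`, stays in the simplex; as `v` and `v'` agree at `j` and `m`, the linear terms
cancel when the two resulting optimality inequalities are added, leaving
`G (p j) + G (p' j) + G (p m) + G (p' m) ≤ G (p j + t) + G (p' j - t) + G (p m - t) + G (p' m + t)`,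
which strict convexity of `G` forbids. -/

open Set

theorem strictConvexOn_of_supporting_line_lt {s : Set ℝ} {f g : ℝ → ℝ} (hs : Convex ℝ s)
    (h : ∀ x ∈ s, ∀ y ∈ s, x ≠ y → f x + g x * (y - x) < f y) : StrictConvexOn ℝ s f := by
  refine ⟨hs, fun x hx y hy hxy a b ha hb hab => ?_⟩
  have hz : a • x + b • y ∈ s := hs hx hy ha.le hb.le hab
  obtain rfl : b = 1 - a := by linarith
  simp only [smul_eq_mul] at hz ⊢
  set z := a * x + (1 - a) * y
  have hx' := h z hz x hx fun e => by
    have : (1 - a) * (y - x) = 0 := by simp only [z] at e; linarith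
    simp [hb.ne', sub_eq_zero, Ne.symm hxy] at this
  have hy' := h z hz y hy fun e => by
    have : a * (x - y) = 0 := by simp only [z] at e; linarith
    simp [ha.ne', sub_eq_zero, hxy] at this
  have hbal : a * (f z + g z * (x - z)) + (1 - a) * (f z + g z * (y - z)) = f z := by
    simp only [z]; ring
  linarith [mul_lt_mul_of_pos_left hx' ha, mul_lt_mul_of_pos_left hy' hb]

theorem StrictConvexOn.map_add_add_map_sub_lt {s : Set ℝ} {f : ℝ → ℝ} (hf : StrictConvexOn ℝ s f)
    {a b t : ℝ} (ha : a ∈ s) (hb : b ∈ s) (ht : 0 < t) (htb : t < b - a) :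
    f (a + t) + f (b - t) < f a + f b := by
  have hab : 0 < b - a := ht.trans htb
  set r := t / (b - a)
  have hr0 : 0 < r := div_pos ht hab
  have hr1 : 0 < 1 - r := sub_pos.2 ((div_lt_one hab).2 htb)
  have hrt : r * (b - a) = t := div_mul_cancel₀ t hab.ne'
  have hleft := hf.2 ha hb (sub_pos.1 hab).ne hr1 hr0 (by ring)
  have hright := hf.2 ha hb (sub_pos.1 hab).ne hr0 hr1 (by ring)
  simp only [smul_eq_mul] at hleft hright
  rw [show (1 - r) * a + r * b = a + t by rw [← hrt]; ring] at hleft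
  rw [show r * a + (1 - r) * b = b - t by rw [← hrt]; ring] at hright
  linarith

section Simplex

variable {ι : Type*} [Fintype ι]

theorem add_smul_single_sub_single_mem_stdSimplex [DecidableEq ι] {p : ι → ℝ}
    (hp : p ∈ stdSimplex ℝ ι) {j m : ι} (hjm : j ≠ m) {t : ℝ} (ht : 0 ≤ t) (htm : t ≤ p m) :
    p + t • (Pi.single j 1 - Pi.single m 1) ∈ stdSimplex ℝ ι := by
  refine ⟨fun k => ?_, ?_⟩
  · rcases eq_or_ne k m with rfl | hkm
    · simpa [hjm.symm] using htm
    · have hj : (0 : ι → ℝ) ≤ Pi.single j 1 := Pi.single_nonneg.2 zero_le_one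
      simpa [hkm] using add_nonneg (hp.1 k) (mul_nonneg ht (hj k))
  · simp [Finset.sum_add_distrib, ← Finset.mul_sum, Finset.sum_sub_distrib, hp.2]

theorem sum_apply_add_smul_single_sub_single [DecidableEq ι] (h : ι → ℝ → ℝ) (p : ι → ℝ)
    {j m : ι} (hjm : j ≠ m) (t : ℝ) :
    ∑ k, h k ((p + t • (Pi.single j 1 - Pi.single m 1) : ι → ℝ) k) =
      ∑ k, h k (p k) + (h j (p j + t) - h j (p j)) + (h m (p m - t) - h m (p m)) := by
  rw [add_assoc, ← sub_eq_iff_eq_add', ← Finset.sum_sub_distrib, Fintype.sum_eq_add j m hjm]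
  · simp [hjm, hjm.symm, sub_eq_add_neg]
  · rintro k ⟨hkj, hkm⟩
    simp [hkj, hkm]

theorem IsMaxOn.stdSimplex_exchange_nonpos [DecidableEq ι] {h : ι → ℝ → ℝ} {p : ι → ℝ}
    (hmax : IsMaxOn (fun q => ∑ k, h k (q k)) (stdSimplex ℝ ι) p) (hp : p ∈ stdSimplex ℝ ι)
    {j m : ι} (hjm : j ≠ m) {t : ℝ} (ht : 0 ≤ t) (htm : t ≤ p m) :
    h j (p j + t) - h j (p j) + (h m (p m - t) - h m (p m)) ≤ 0 := by
  have := isMaxOn_iff.1 hmax _ (add_smul_single_sub_single_mem_stdSimplex hp hjm ht htm)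
  rw [sum_apply_add_smul_single_sub_single h p hjm t] at this
  linarith

theorem sum_mul_sub_sub_sum_mul_sub {v v' : ι → ℝ} {i : ι} (hv : ∀ k, k ≠ i → v' k = v k)
    (q : ι → ℝ) (G : ℝ → ℝ) :
    ∑ k, (v' k * q k - G (q k)) - ∑ k, (v k * q k - G (q k)) = (v' i - v i) * q i := by
  rw [← Finset.sum_sub_distrib, Fintype.sum_eq_single i fun k hk => by simp [hv k hk]]
  ring

theorem apply_le_of_isMaxOn_of_lt {G : ℝ → ℝ} (hG : StrictConvexOn ℝ (Icc 0 1) G)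
    {v v' : ι → ℝ} {i : ι} (hvi : v i < v' i) (hv : ∀ k, k ≠ i → v' k = v k) {p p' : ι → ℝ}
    (hmax : IsMaxOn (fun q => ∑ k, (v k * q k - G (q k))) (stdSimplex ℝ ι) p)
    (hmax' : IsMaxOn (fun q => ∑ k, (v' k * q k - G (q k))) (stdSimplex ℝ ι) p')
    (hp : p ∈ stdSimplex ℝ ι) (hp' : p' ∈ stdSimplex ℝ ι) {j : ι} (hji : j ≠ i) :
    p' j ≤ p j := by
  classical
  have hi : p i ≤ p' i := by
    have h₁ := isMaxOn_iff.1 hmax p' hp'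
    have h₂ := isMaxOn_iff.1 hmax' p hp
    have hgap := sum_mul_sub_sub_sum_mul_sub hv p G
    have hgap' := sum_mul_sub_sub_sum_mul_sub hv p' G
    exact le_of_mul_le_mul_left (by linarith) (sub_pos.2 hvi)
  by_contra! hj
  obtain ⟨m, hm⟩ : ∃ m, p' m < p m := by
    by_contra! hle
    have := Finset.sum_lt_sum (fun k _ => hle k) ⟨j, Finset.mem_univ j, hj⟩
    linarith [hp.2, hp'.2]
  have hmi : m ≠ i := by rintro rfl; linarith
  have hjm : j ≠ m := by rintro rfl; linarith
  obtain ⟨t, ht, htjm⟩ := exists_between (lt_min (sub_pos.2 hj) (sub_pos.2 hm))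
  obtain ⟨htj, htm⟩ := lt_min_iff.1 htjm
  have hA := IsMaxOn.stdSimplex_exchange_nonpos (h := fun k x => v k * x - G x) hmax hp hjm ht.le
    (by linarith [(hp'.1 m : 0 ≤ p' m)])
  have hB := IsMaxOn.stdSimplex_exchange_nonpos (h := fun k x => v' k * x - G x) hmax' hp'
    hjm.symm ht.le (by linarith [(hp.1 j : 0 ≤ p j)])
  have hGj := hG.map_add_add_map_sub_lt (mem_Icc_of_mem_stdSimplex hp j)
    (mem_Icc_of_mem_stdSimplex hp' j) ht htj
  have hGm := hG.map_add_add_map_sub_lt (mem_Icc_of_mem_stdSimplex hp' m)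
    (mem_Icc_of_mem_stdSimplex hp m) ht htm
  simp only [hv j hji, hv m hmi] at hB
  linarith

end Simplex

theorem strictConvexOn_const_mul_comp_mul {φ : ℝ → ℝ} {N ρ c : ℝ} (hN : 0 < N) (hρ : 0 < ρ)
    (hc : 0 < c)
    (hsc : ∀ z ∈ Icc 0 N, ∀ z' ∈ Icc 0 N,
      φ z + deriv φ z * (z' - z) + ρ / 2 * (z - z') ^ 2 ≤ φ z') :
    StrictConvexOn ℝ (Icc 0 1) (fun x => c * φ (N * x)) := by
  have hscale : ∀ z ∈ Icc (0 : ℝ) 1, N * z ∈ Icc 0 N := fun z hz =>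
    ⟨mul_nonneg hN.le hz.1, mul_le_of_le_one_right hN.le hz.2⟩
  refine strictConvexOn_of_supporting_line_lt (g := fun x => c * N * deriv φ (N * x))
    (convex_Icc 0 1) fun x hx y hy hxy => ?_
  have hsq : 0 < ρ / 2 * (N * x - N * y) ^ 2 := by
    have : N * x - N * y ≠ 0 := by
      rw [← mul_sub]; exact mul_ne_zero hN.ne' (sub_ne_zero.2 hxy)
    positivity
  have hsupp : φ (N * x) + deriv φ (N * x) * (N * y - N * x) < φ (N * y) := by
    linarith [hsc _ (hscale x hx) _ (hscale y hy)]
  calc c * φ (N * x) + c * N * deriv φ (N * x) * (y - x)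
      = c * (φ (N * x) + deriv φ (N * x) * (N * y - N * x)) := by ring
    _ < c * φ (N * y) := mul_lt_mul_of_pos_left hsupp hc

theorem hardness_weighted_sampler_antitone_other_loss_general
    (n : ℕ) (hn : 1 ≤ n) (β ρ : ℝ) (hβ : 0 < β) (hρ : 0 < ρ)
    (φ : ℝ → ℝ)
    (hsc : ∀ z ∈ Set.Icc (0:ℝ) (n:ℝ), ∀ z' ∈ Set.Icc (0:ℝ) (n:ℝ),
      φ z + deriv φ z * (z' - z) + ρ / 2 * (z - z')^2 ≤ φ z')
    (f : (Fin n → ℝ) → (Fin n → ℝ) → ℝ)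
    (hf : ∀ w q, f w q = ∑ k, w k * q k - (1 / (β * n)) * ∑ k, φ (n * q k))
    (i : Fin n) (v : Fin n → ℝ) (ε : ℝ) (hε : 0 < ε)
    (v' : Fin n → ℝ) (hv' : v' = v + ε • (Pi.single i 1 : Fin n → ℝ))
    (p p' : Fin n → ℝ)
    (hpmem : p ∈ stdSimplex ℝ (Fin n))
    (hpmax : ∀ q ∈ stdSimplex ℝ (Fin n), f v q ≤ f v p)
    (hp'mem : p' ∈ stdSimplex ℝ (Fin n))
    (hp'max : ∀ q ∈ stdSimplex ℝ (Fin n), f v' q ≤ f v' p') :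
    ∀ j : Fin n, j ≠ i → p' j ≤ p j := by
  have hn0 : (0 : ℝ) < n := Nat.cast_pos.2 hn
  have hG := strictConvexOn_const_mul_comp_mul hn0 hρ (by positivity : 0 < 1 / (β * n)) hsc
  have hobj : ∀ w, f w = fun q => ∑ k, (w k * q k - 1 / (β * n) * φ (n * q k)) := fun w =>
    funext fun q => by rw [hf, Finset.mul_sum, ← Finset.sum_sub_distrib]
  have hvi : v i < v' i := by simp [hv', hε]
  have hv : ∀ k, k ≠ i → v' k = v k := fun k hk => by simp [hv', hk]
  intro j hji
  refine apply_le_of_isMaxOn_of_lt hG hvi hv ?_ ?_ hpmem hp'mem hji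
  · rw [← hobj]; exact isMaxOn_iff.2 hpmax
  · rw [← hobj]; exact isMaxOn_iff.2 hp'max

/-- Exploration property: the hardness weighted sampling probability of every
other example is a nonincreasing function of the `i`-th loss value. -/
theorem hardness_weighted_sampler_antitone_other_loss
    (n : ℕ) (hn : 1 ≤ n) (β ρ : ℝ) (hβ : 0 < β) (hρ : 0 < ρ)
    (φ : ℝ → ℝ)
    (hC2 : ContDiffOn ℝ 2 φ (Set.Icc (0:ℝ) (n:ℝ)))
    (hsc : ∀ z ∈ Set.Icc (0:ℝ) (n:ℝ), ∀ z' ∈ Set.Icc (0:ℝ) (n:ℝ),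
      φ z + deriv φ z * (z' - z) + ρ / 2 * (z - z')^2 ≤ φ z')
    (hφ0 : ∀ z : ℝ, 0 ≤ φ z) (hφ1 : φ 1 = 0) (hφ1' : deriv φ 1 = 0)
    (f : (Fin n → ℝ) → (Fin n → ℝ) → ℝ)
    (hf : ∀ w q, f w q = ∑ k, w k * q k - (1 / (β * n)) * ∑ k, φ (n * q k))
    (i : Fin n) (v : Fin n → ℝ) (ε : ℝ) (hε : 0 < ε)
    (v' : Fin n → ℝ) (hv' : v' = v + ε • (Pi.single i 1 : Fin n → ℝ))
    (p p' : Fin n → ℝ)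
    (hpmem : p ∈ stdSimplex ℝ (Fin n))
    (hpmax : ∀ q ∈ stdSimplex ℝ (Fin n), f v q ≤ f v p)
    (hp'mem : p' ∈ stdSimplex ℝ (Fin n))
    (hp'max : ∀ q ∈ stdSimplex ℝ (Fin n), f v' q ≤ f v' p') :
    ∀ j : Fin n, j ≠ i → p' j ≤ p j :=
  hardness_weighted_sampler_antitone_other_loss_general n hn β ρ hβ hρ φ hsc f hf i v ε hε v' hv' p
    p' hpmem hpmax hp'mem hp'max
end

section
/- Let n ≥ 1, d ≥ 1 and constants K ≥ 0, C_L ≥ 0, C_∇ ≥ 0. Let p̄ : ℝ^n → ℝ^n be K-Lipschitz with p̄(v) ∈ Δ_n for every v ∈ ℝ^n. For i = 1, …, n, let ℓ_i : ℝ^d → ℝ be differentiable, C_L-Lipschitz, and with C_∇-Lipschitz gradient. For z = (z_1, …, z_n) ∈ (ℝ^d)^n define L(z) = (ℓ_1(z_1), …, ℓ_n(z_n)) ∈ ℝ^n and the vector field F(z) = (p̄_1(L(z)) ∇ℓ_1(z_1), …, p̄_n(L(z)) ∇ℓ_n(z_n)) ∈ (ℝ^d)^n. Then for all z, z' ∈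 (ℝ^d)^n, Σ_{i=1}^n ⟨F_i(z) − F_i(z'), z_i − z'_i⟩ ≤ (K C_L² + 2 C_∇) Σ_{i=1}^n ‖z_i − z'_i‖². (The composite R ∘ L is one-sided gradient Lipschitz with constant β C(𝓛)²/(nρ) + 2 C(∇𝓛).) -/
/-!
Write `p = p̄(L z)`, `p' = p̄(L z')` and `Δ = z - z'`. Each summand splits as
`pᵢ ⟨∇ℓᵢ(zᵢ) - ∇ℓᵢ(z'ᵢ), Δᵢ⟩ + (pᵢ - p'ᵢ) ⟨∇ℓᵢ(z'ᵢ), Δᵢ⟩`. Since `0 ≤ pᵢ ≤ 1`, the first parts sum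
to at most `C_∇ ‖Δ‖²`. The second parts form the inner product of `p - p'` with a vector whose
coordinates are bounded by `C_L ‖Δᵢ‖` (as `‖∇ℓᵢ‖ ≤ C_L`), so by Cauchy–Schwarz they sum to at most
`‖p - p'‖ C_L ‖Δ‖ ≤ K ‖L z - L z'‖ C_L ‖Δ‖ ≤ K C_L² ‖Δ‖²`.
-/

open Finset
open scoped RealInnerProductSpace

theorem HasGradientAt.norm_le_of_abs_sub_le {E : Type*} [NormedAddCommGroup E]
    [InnerProductSpace ℝ E] [CompleteSpace E] {f : E → ℝ} {f' x : E} {C : ℝ}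
    (hf : HasGradientAt f f' x) (hC : 0 ≤ C) (hlip : ∀ u v, |f u - f v| ≤ C * ‖u - v‖) :
    ‖f'‖ ≤ C := by
  simpa using hf.hasFDerivAt.le_of_lip' hC (.of_forall fun y ↦ hlip y x)

theorem PiLp.norm_le_mul_norm_of_forall_norm_le {ι : Type*} [Fintype ι] {α β : ι → Type*}
    [∀ i, SeminormedAddCommGroup (α i)] [∀ i, SeminormedAddCommGroup (β i)]
    {x : PiLp 2 α} {y : PiLp 2 β} {C : ℝ} (hC : 0 ≤ C) (h : ∀ i, ‖x i‖ ≤ C * ‖y i‖) :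
    ‖x‖ ≤ C * ‖y‖ := by
  rw [PiLp.norm_eq_of_L2, PiLp.norm_eq_of_L2, ← Real.sqrt_sq hC,
    ← Real.sqrt_mul (sq_nonneg C), mul_sum]
  gcongr with i
  rw [← mul_pow]
  exact pow_le_pow_left₀ (norm_nonneg _) (h i) 2

theorem sum_inner_smul_sub_smul_le {ι E : Type*} [Fintype ι] [NormedAddCommGroup E]
    [InnerProductSpace ℝ E] (p p' : EuclideanSpace ℝ ι) (u u' Δ : ι → E) {C C' : ℝ}
    (hC : 0 ≤ C) (hC' : 0 ≤ C') (hp : ∀ i, p i ∈ Set.Icc 0 1)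
    (hu : ∀ i, ‖u i - u' i‖ ≤ C * ‖Δ i‖) (hu' : ∀ i, ‖u' i‖ ≤ C') :
    ∑ i, ⟪p i • u i - p' i • u' i, Δ i⟫
      ≤ C * ∑ i, ‖Δ i‖ ^ 2 + C' * ‖p - p'‖ * ‖WithLp.toLp 2 Δ‖ := by
  let w : EuclideanSpace ℝ ι := WithLp.toLp 2 fun i ↦ ⟪u' i, Δ i⟫
  have hsplit : ∑ i, ⟪p i • u i - p' i • u' i, Δ i⟫
      = ∑ i, p i * ⟪u i - u' i, Δ i⟫ + ⟪p - p', w⟫ := by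
    simp only [PiLp.inner_apply, w, ← sum_add_distrib]
    refine sum_congr rfl fun i _ ↦ ?_
    rw [show p i • u i - p' i • u' i = p i • (u i - u' i) + (p i - p' i) • u' i by module]
    simp [inner_add_left, real_inner_smul_left, mul_comm]
  have hmain : ∀ i, p i * ⟪u i - u' i, Δ i⟫ ≤ C * ‖Δ i‖ ^ 2 := fun i ↦ by
    have hCS : ⟪u i - u' i, Δ i⟫ ≤ C * ‖Δ i‖ ^ 2 := by
      nlinarith [real_inner_le_norm (u i - u' i) (Δ i), hu i, norm_nonneg (Δ i)]
    calc p i * ⟪u i - u' i, Δ i⟫ ≤ p i * (C * ‖Δ i‖ ^ 2) :=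
          mul_le_mul_of_nonneg_left hCS (hp i).1
      _ ≤ C * ‖Δ i‖ ^ 2 := mul_le_of_le_one_left (by positivity) (hp i).2
  have hw : ‖w‖ ≤ C' * ‖WithLp.toLp 2 Δ‖ :=
    PiLp.norm_le_mul_norm_of_forall_norm_le hC' fun i ↦ by
      simpa [w] using (abs_real_inner_le_norm (u' i) (Δ i)).trans
        (mul_le_mul_of_nonneg_right (hu' i) (norm_nonneg _))
  calc ∑ i, ⟪p i • u i - p' i • u' i, Δ i⟫
      = ∑ i, p i * ⟪u i - u' i, Δ i⟫ + ⟪p - p', w⟫ := hsplit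
    _ ≤ ∑ i, C * ‖Δ i‖ ^ 2 + ‖p - p'‖ * (C' * ‖WithLp.toLp 2 Δ‖) := by
      gcongr ?_ + ?_
      · exact sum_le_sum fun i _ ↦ hmain i
      · exact (real_inner_le_norm _ _).trans (by gcongr)
    _ = C * ∑ i, ‖Δ i‖ ^ 2 + C' * ‖p - p'‖ * ‖WithLp.toLp 2 Δ‖ := by rw [mul_sum]; ring

theorem robust_loss_one_sided_gradient_lipschitz_general
    (n d : ℕ)
    (K CL Cgrad : ℝ) (hK : 0 ≤ K) (hCL : 0 ≤ CL) (hCgrad : 0 ≤ Cgrad)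
    (pbar : EuclideanSpace ℝ (Fin n) → EuclideanSpace ℝ (Fin n))
    (hpbarSimplex : ∀ v, (∀ i, 0 ≤ pbar v i) ∧ ∑ i, pbar v i = 1)
    (hpbarLip : ∀ v v', ‖pbar v - pbar v'‖ ≤ K * ‖v - v'‖)
    (ℓ : Fin n → EuclideanSpace ℝ (Fin d) → ℝ)
    (g : Fin n → EuclideanSpace ℝ (Fin d) → EuclideanSpace ℝ (Fin d))
    (hgrad : ∀ i x, HasGradientAt (ℓ i) (g i x) x)
    (hℓLip : ∀ i x y, |ℓ i x - ℓ i y| ≤ CL * ‖x - y‖)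
    (hgLip : ∀ i x y, ‖g i x - g i y‖ ≤ Cgrad * ‖x - y‖)
    (L : (Fin n → EuclideanSpace ℝ (Fin d)) → EuclideanSpace ℝ (Fin n))
    (hL : ∀ z i, L z i = ℓ i (z i))
    (F : (Fin n → EuclideanSpace ℝ (Fin d)) → Fin n → EuclideanSpace ℝ (Fin d))
    (hF : ∀ z i, F z i = pbar (L z) i • g i (z i)) :
    ∀ z z' : Fin n → EuclideanSpace ℝ (Fin d),
      ∑ i, ⟪F z i - F z' i, z i - z' i⟫
        ≤ (K * CL ^ 2 + 2 * Cgrad) * ∑ i, ‖z i - z' i‖ ^ 2 := by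
  intro z z'
  set Δ := WithLp.toLp 2 (z - z')
  have hΔ : ∑ i, ‖z i - z' i‖ ^ 2 = ‖Δ‖ ^ 2 := (PiLp.norm_sq_eq_of_L2 _ Δ).symm
  have hLz : ‖L z - L z'‖ ≤ CL * ‖Δ‖ :=
    PiLp.norm_le_mul_norm_of_forall_norm_le hCL fun i ↦ by
      simpa [hL, Δ] using hℓLip i (z i) (z' i)
  have hFz := sum_inner_smul_sub_smul_le (pbar (L z)) (pbar (L z')) (fun i ↦ g i (z i))
    (fun i ↦ g i (z' i)) (z - z') hCgrad hCL
    (fun i ↦ mem_Icc_of_mem_stdSimplex (hpbarSimplex (L z)) i)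
    (fun i ↦ hgLip i (z i) (z' i))
    (fun i ↦ (hgrad i (z' i)).norm_le_of_abs_sub_le hCL (hℓLip i))
  simp only [← hF, Pi.sub_apply, hΔ] at hFz
  rw [hΔ]
  calc ∑ i, ⟪F z i - F z' i, z i - z' i⟫
      ≤ Cgrad * ‖Δ‖ ^ 2 + CL * ‖pbar (L z) - pbar (L z')‖ * ‖Δ‖ := hFz
    _ ≤ Cgrad * ‖Δ‖ ^ 2 + CL * (K * (CL * ‖Δ‖)) * ‖Δ‖ := by
      gcongr
      exact (hpbarLip _ _).trans (mul_le_mul_of_nonneg_left hLz hK)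
    _ ≤ (K * CL ^ 2 + 2 * Cgrad) * ‖Δ‖ ^ 2 := by nlinarith [sq_nonneg ‖Δ‖]

/-- One-sided gradient Lipschitz property of the distributionally robust loss
composed with the per-example losses: the vector field
`F(z)ᵢ = p̄ᵢ(L(z)) ∇ℓᵢ(zᵢ)` satisfies
`Σᵢ ⟨Fᵢ(z) − Fᵢ(z'), zᵢ − z'ᵢ⟩ ≤ (K C_L² + 2 C_∇) Σᵢ ‖zᵢ − z'ᵢ‖²`. -/
theorem robust_loss_one_sided_gradient_lipschitz
    (n d : ℕ) (hn : 1 ≤ n) (hd : 1 ≤ d)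
    (K CL Cgrad : ℝ) (hK : 0 ≤ K) (hCL : 0 ≤ CL) (hCgrad : 0 ≤ Cgrad)
    (pbar : EuclideanSpace ℝ (Fin n) → EuclideanSpace ℝ (Fin n))
    (hpbarSimplex : ∀ v, (∀ i, 0 ≤ pbar v i) ∧ ∑ i, pbar v i = 1)
    (hpbarLip : ∀ v v', ‖pbar v - pbar v'‖ ≤ K * ‖v - v'‖)
    (ℓ : Fin n → EuclideanSpace ℝ (Fin d) → ℝ)
    (g : Fin n → EuclideanSpace ℝ (Fin d) → EuclideanSpace ℝ (Fin d))
    (hgrad : ∀ i x, HasGradientAt (ℓ i) (g i x) x)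
    (hℓLip : ∀ i x y, |ℓ i x - ℓ i y| ≤ CL * ‖x - y‖)
    (hgLip : ∀ i x y, ‖g i x - g i y‖ ≤ Cgrad * ‖x - y‖)
    (L : (Fin n → EuclideanSpace ℝ (Fin d)) → EuclideanSpace ℝ (Fin n))
    (hL : ∀ z i, L z i = ℓ i (z i))
    (F : (Fin n → EuclideanSpace ℝ (Fin d)) → Fin n → EuclideanSpace ℝ (Fin d))
    (hF : ∀ z i, F z i = pbar (L z) i • g i (z i)) :
    ∀ z z' : Fin n → EuclideanSpace ℝ (Fin d),
      ∑ i, ⟪F z i - F z' i, z i - z' i⟫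
        ≤ (K * CL ^ 2 + 2 * Cgrad) * ∑ i, ‖z i - z' i‖ ^ 2 :=
  robust_loss_one_sided_gradient_lipschitz_general n d K CL Cgrad hK hCL hCgrad pbar hpbarSimplex
    hpbarLip ℓ g hgrad hℓLip hgLip L hL F hF
end
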